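/- For every evolution frame EF, any equivalence relation E on a set S of knowledge states that is compatible with strong equivalence (s E s' implies s ≡_EF s') and respects the successor relation induces a quotient Kripke structure K^{E,S}_EF = ⟨S/E, R_E, L_E⟩, with [s] R_E [s'] iff some representatives are in the successor relation and L_E([s]) = Bel(s), that is bisimilar to the Kripke structure K_EF restricted to S; consequently, for every knowledge state s whose descendants all lie in S and every EKBL formula φ, EF, s ⊨ φ iff K^{E,S}_EF, [s] ⊨ φ. -/
import Mathlib


mutual
inductive SForm (Rule : Type) : Type
  | atom : Rule → SForm Rule
  | conj : SForm Rule → SForm Rule → SForm Rule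
  | nnot : SForm Rule → SForm Rule
  | ex : EForm Rule → SForm Rule
  | all : EForm Rule → SForm Rule
inductive EForm (Rule : Type) : Type
  | next : SForm Rule → EForm Rule
  | untl : SForm Rule → SForm Rule → EForm Rule
end

/-- A path in a transition system. -/
def IsPath {σ : Type} (R : σ → σ → Prop) (p : ℕ → σ) : Prop :=
  ∀ i, R (p i) (p (i + 1))

mutual
/-- Satisfaction of EKBL state formulas over a Kripke-style structure with
    states `σ`, transition relation `R`, and labelling `L`. -/
def SatS {Rule σ : Type} (R : σ → σ → Prop) (L : σ → Set Rule) : σ → SForm Rule → Prop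
  | s, .atom r => r ∈ L s
  | s, .conj φ ψ => SatS R L s φ ∧ SatS R L s ψ
  | s, .nnot φ => ¬ SatS R L s φ
  | s, .ex φ => ∃ p : ℕ → σ, IsPath R p ∧ p 0 = s ∧ SatE R L p φ
  | s, .all φ => ∀ p : ℕ → σ, IsPath R p → p 0 = s → SatE R L p φ
/-- Satisfaction of EKBL evolution formulas along a path. -/
def SatE {Rule σ : Type} (R : σ → σ → Prop) (L : σ → Set Rule) : (ℕ → σ) → EForm Rule → Prop
  | p, .next φ => SatS R L (p 1) φ
  | p, .untl φ ψ => ∃ i, SatS R L (p i) ψ ∧ ∀ j, j < i → SatS R L (p j) φ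
end

structure KState (Rule Event : Type) : Type where
  kb : Set Rule
  events : List Event

/-- Append a sequence of events to a knowledge state. -/
def KState.append {Rule Event : Type} (s : KState Rule Event) (es : List Event) :
    KState Rule Event := ⟨s.kb, s.events ++ es⟩

/-- All events of the list belong to the event class `EC`. -/
def InEC {Event : Type} (EC : Set Event) (es : List Event) : Prop := ∀ E ∈ es, E ∈ EC

/-- Successor relation on knowledge states induced by the event class `EC`. -/
def Succ {Rule Event : Type} (EC : Set Event) (s s' : KState Rule Event) : Prop :=
  ∃ E ∈ EC, s' = s.append [E]

/-- Strong equivalence of knowledge states with respect to belief operator `B`. -/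
def StrongEquiv {Rule Event : Type} (B : KState Rule Event → Set Rule) (EC : Set Event)
    (s s' : KState Rule Event) : Prop :=
  ∀ es : List Event, InEC EC es → B (s.append es) = B (s'.append es)

/-- k-equivalence of knowledge states. -/
def KEquiv {Rule Event : Type} (B : KState Rule Event → Set Rule) (EC : Set Event) (k : ℕ)
    (s s' : KState Rule Event) : Prop :=
  ∀ es : List Event, InEC EC es → es.length ≤ k → B (s.append es) = B (s'.append es)

/-- The equivalence class of `s` within `S` under the relation `R`. -/
def cls {α : Type} (R : α → α → Prop) (S : Set α) (s : α) : Set α := {t ∈ S | R s t}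

/-- `S` is closed under taking successor knowledge states (one per event of `EC`). -/
def SuccClosed {Rule Event : Type} (EC : Set Event) (S : Set (KState Rule Event)) : Prop :=
  ∀ s ∈ S, ∀ E ∈ EC, s.append [E] ∈ S

/-- `Z` is a bisimulation between the labelled transition systems `(σ1, R1, L1)` and
    `(σ2, R2, L2)`: related states have equal labels and matching transitions. -/
def IsBisim {σ1 σ2 Rule : Type} (R1 : σ1 → σ1 → Prop) (L1 : σ1 → Set Rule)
    (R2 : σ2 → σ2 → Prop) (L2 : σ2 → Set Rule) (Z : σ1 → σ2 → Prop) : Prop :=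
  ∀ a b, Z a b → L1 a = L2 b ∧
    (∀ a', R1 a a' → ∃ b', R2 b b' ∧ Z a' b') ∧
    (∀ b', R2 b b' → ∃ a', R1 a a' ∧ Z a' b')

section Bisim

variable {Rule σ1 σ2 : Type} {R1 : σ1 → σ1 → Prop} {L1 : σ1 → Set Rule}
  {R2 : σ2 → σ2 → Prop} {L2 : σ2 → Set Rule} {Z : σ1 → σ2 → Prop}

noncomputable def liftF (hZ : IsBisim R1 L1 R2 L2 Z) (p : ℕ → σ1) (hp : IsPath R1 p)
    (b : σ2) (h0 : Z (p 0) b) : ∀ n : ℕ, {c : σ2 // Z (p n) c}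
  | 0 => ⟨b, h0⟩
  | n+1 =>
    let prev := liftF hZ p hp b h0 n
    ⟨((hZ (p n) prev.1 prev.2).2.1 (p (n+1)) (hp n)).choose,
     ((hZ (p n) prev.1 prev.2).2.1 (p (n+1)) (hp n)).choose_spec.2⟩

theorem liftF_path (hZ : IsBisim R1 L1 R2 L2 Z) (p : ℕ → σ1) (hp : IsPath R1 p)
    (b : σ2) (h0 : Z (p 0) b) : IsPath R2 (fun n => (liftF hZ p hp b h0 n).1) := by
  intro n
  show R2 _ ((liftF hZ p hp b h0 (n+1)).1)
  simp only [liftF]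
  exact ((hZ (p n) _ (liftF hZ p hp b h0 n).2).2.1 (p (n+1)) (hp n)).choose_spec.1

noncomputable def liftB (hZ : IsBisim R1 L1 R2 L2 Z) (q : ℕ → σ2) (hq : IsPath R2 q)
    (a : σ1) (h0 : Z a (q 0)) : ∀ n : ℕ, {c : σ1 // Z c (q n)}
  | 0 => ⟨a, h0⟩
  | n+1 =>
    let prev := liftB hZ q hq a h0 n
    ⟨((hZ prev.1 (q n) prev.2).2.2 (q (n+1)) (hq n)).choose,
     ((hZ prev.1 (q n) prev.2).2.2 (q (n+1)) (hq n)).choose_spec.2⟩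

theorem liftB_path (hZ : IsBisim R1 L1 R2 L2 Z) (q : ℕ → σ2) (hq : IsPath R2 q)
    (a : σ1) (h0 : Z a (q 0)) : IsPath R1 (fun n => (liftB hZ q hq a h0 n).1) := by
  intro n
  show R1 _ ((liftB hZ q hq a h0 (n+1)).1)
  simp only [liftB]
  exact ((hZ (liftB hZ q hq a h0 n).1 (q n) (liftB hZ q hq a h0 n).2).2.2 (q (n+1)) (hq n)).choose_spec.1

mutual

theorem bisim_satS (hZ : IsBisim R1 L1 R2 L2 Z) :
    ∀ (φ : SForm Rule) (a : σ1) (b : σ2), Z a b → (SatS R1 L1 a φ ↔ SatS R2 L2 b φ)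
  | .atom r, a, b, h => by
      simp only [SatS]; rw [(hZ a b h).1]
  | .conj φ ψ, a, b, h => by
      simp only [SatS]
      exact and_congr (bisim_satS hZ φ a b h) (bisim_satS hZ ψ a b h)
  | .nnot φ, a, b, h => by
      simp only [SatS]
      exact not_congr (bisim_satS hZ φ a b h)
  | .ex φ, a, b, h => by
      simp only [SatS]
      constructor
      · rintro ⟨p, hp, h0, hsat⟩
        have h0' : Z (p 0) b := h0 ▸ h
        refine ⟨fun n => (liftF hZ p hp b h0' n).1, liftF_path hZ p hp b h0', rfl, ?_⟩
        exact (bisim_satE hZ φ p _ (fun n => (liftF hZ p hp b h0' n).2)).mp hsat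
      · rintro ⟨q, hq, h0, hsat⟩
        have h0' : Z a (q 0) := h0 ▸ h
        refine ⟨fun n => (liftB hZ q hq a h0' n).1, liftB_path hZ q hq a h0', rfl, ?_⟩
        exact (bisim_satE hZ φ _ q (fun n => (liftB hZ q hq a h0' n).2)).mpr hsat
  | .all φ, a, b, h => by
      simp only [SatS]
      constructor
      · intro h1 q hq h0
        have h0' : Z a (q 0) := h0 ▸ h
        exact (bisim_satE hZ φ _ q (fun n => (liftB hZ q hq a h0' n).2)).mp
          (h1 _ (liftB_path hZ q hq a h0') rfl)
      · intro h2 p hp h0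
        have h0' : Z (p 0) b := h0 ▸ h
        exact (bisim_satE hZ φ p _ (fun n => (liftF hZ p hp b h0' n).2)).mpr
          (h2 _ (liftF_path hZ p hp b h0') rfl)

theorem bisim_satE (hZ : IsBisim R1 L1 R2 L2 Z) :
    ∀ (φ : EForm Rule) (p : ℕ → σ1) (q : ℕ → σ2), (∀ n, Z (p n) (q n)) →
      (SatE R1 L1 p φ ↔ SatE R2 L2 q φ)
  | .next φ, p, q, h => by
      simp only [SatE]; exact bisim_satS hZ φ (p 1) (q 1) (h 1)
  | .untl φ ψ, p, q, h => by
      simp only [SatE]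
      exact exists_congr fun i => and_congr (bisim_satS hZ ψ (p i) (q i) (h i))
        (forall_congr' fun j => imp_congr Iff.rfl (bisim_satS hZ φ (p j) (q j) (h j)))

end

end Bisim

theorem KState.append_nil {Rule Event : Type} (s : KState Rule Event) : s.append [] = s := by
  simp [KState.append]

theorem KState.append_append {Rule Event : Type} (s : KState Rule Event) (es es' : List Event) :
    (s.append es).append es' = s.append (es ++ es') := by
  simp [KState.append]

/-- Any equivalence relation `E` on a successor-closed set `S` of
    knowledge states that is compatible with strong equivalence and respects the
    successor relation induces a quotient Kripke structure (classes as states,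
    transitions between classes containing related representatives, labels the common
    belief sets) which is bisimilar to the Kripke structure of the evolution frame
    restricted to `S`; consequently, for every knowledge state `s` whose descendants
    all lie in `S` and every EKBL formula `φ`, `EF, s ⊨ φ` iff the class of `s`
    satisfies `φ` in the quotient structure. -/
theorem quotient_kripke_bisimilar {Rule Event : Type}
    (B : KState Rule Event → Set Rule) (EC : Set Event)
    (S : Set (KState Rule Event))
    (E : KState Rule Event → KState Rule Event → Prop)
    (hE : Equivalence E)
    (hcompat : ∀ s ∈ S, ∀ t ∈ S, E s t → StrongEquiv B EC s t)
    (hresp : ∀ s ∈ S, ∀ t ∈ S, E s t → ∀ e ∈ EC, E (s.append [e]) (t.append [e]))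
    (hSucc : SuccClosed EC S) :
    IsBisim (σ1 := {a // a ∈ S})
        (σ2 := {C : Set (KState Rule Event) // ∃ t ∈ S, C = cls E S t})
        (fun a b => Succ EC a.1 b.1) (fun a => B a.1)
        (fun C C' => ∃ t ∈ C.1, ∃ t' ∈ C'.1, Succ EC t t')
        (fun C => {r | ∃ t ∈ C.1, r ∈ B t})
        (fun a C => a.1 ∈ C.1) ∧
    ∀ s : KState Rule Event, ∀ hs : s ∈ S, (∀ es : List Event, InEC EC es → s.append es ∈ S) →
      ∀ φ : SForm Rule,
        SatS (Succ EC) B s φ ↔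
          SatS (σ := {C : Set (KState Rule Event) // ∃ t ∈ S, C = cls E S t})
            (fun C C' => ∃ t ∈ C.1, ∃ t' ∈ C'.1, Succ EC t t')
            (fun C => {r | ∃ t ∈ C.1, r ∈ B t})
            ⟨cls E S s, s, hs, rfl⟩ φ := by
  classical
  set QS := {C : Set (KState Rule Event) // ∃ t ∈ S, C = cls E S t} with hQS
  -- label lemma
  have hlabel : ∀ t₀ ∈ S, ∀ s ∈ cls E S t₀, B s = {r | ∃ t ∈ cls E S t₀, r ∈ B t} := by
    intro t₀ ht₀ s hs
    ext r
    constructor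
    · intro hr; exact ⟨s, hs, hr⟩
    · rintro ⟨t, ht, hr⟩
      have hEst : E s t := hE.trans (hE.symm hs.2) ht.2
      have := hcompat s hs.1 t ht.1 hEst [] (by intro e he; cases he)
      rw [KState.append_nil, KState.append_nil] at this
      rw [this]; exact hr
  -- class step lemma
  have hstep : ∀ t₀ ∈ S, ∀ s ∈ cls E S t₀, ∀ t ∈ cls E S t₀, ∀ e ∈ EC,
      s.append [e] ∈ cls E S (t.append [e]) := by
    intro t₀ ht₀ s hs t ht e he
    have hEst : E s t := hE.trans (hE.symm hs.2) ht.2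
    exact ⟨hSucc s hs.1 e he, hE.symm (hresp s hs.1 t ht.1 hEst e he)⟩
  have hbisim1 : IsBisim (σ1 := {a // a ∈ S}) (σ2 := QS)
      (fun a b => Succ EC a.1 b.1) (fun a => B a.1)
      (fun C C' => ∃ t ∈ C.1, ∃ t' ∈ C'.1, Succ EC t t')
      (fun C => {r | ∃ t ∈ C.1, r ∈ B t})
      (fun a C => a.1 ∈ C.1) := by
    rintro a ⟨C, t₀, ht₀, rfl⟩ hmem
    refine ⟨hlabel t₀ ht₀ a.1 hmem, ?_, ?_⟩
    · rintro a' ⟨e, he, ha'⟩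
      refine ⟨⟨cls E S a'.1, a'.1, a'.2, rfl⟩, ⟨a.1, hmem, a'.1, ⟨a'.2, hE.refl _⟩, e, he, ha'⟩,
        ⟨a'.2, hE.refl _⟩⟩
    · rintro ⟨C', t₀', ht₀', rfl⟩ ⟨t, ht, t', ht', e, he, rfl⟩
      refine ⟨⟨a.1.append [e], hSucc a.1 a.2 e he⟩, ⟨e, he, rfl⟩, ?_⟩
      have h1 : a.1.append [e] ∈ cls E S (t.append [e]) := hstep t₀ ht₀ a.1 hmem t ht e he
      exact ⟨h1.1, hE.trans ht'.2 h1.2⟩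
  refine ⟨hbisim1, ?_⟩
  -- second part: bisimulation between full KState space and quotient
  set Z2 : KState Rule Event → QS → Prop :=
    fun s C => (∀ es : List Event, InEC EC es → s.append es ∈ S) ∧ s ∈ C.1 with hZ2
  have hbisim2 : IsBisim (Succ EC) B
      (fun C C' : QS => ∃ t ∈ C.1, ∃ t' ∈ C'.1, Succ EC t t')
      (fun C : QS => {r | ∃ t ∈ C.1, r ∈ B t}) Z2 := by
    rintro s ⟨C, t₀, ht₀, rfl⟩ ⟨hcl, hmem⟩
    refine ⟨hlabel t₀ ht₀ s hmem, ?_, ?_⟩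
    · rintro s' ⟨e, he, rfl⟩
      refine ⟨⟨cls E S (s.append [e]), s.append [e], hSucc s hmem.1 e he, rfl⟩,
        ⟨s, hmem, s.append [e], ⟨hSucc s hmem.1 e he, hE.refl _⟩, e, he, rfl⟩,
        ?_, ⟨hSucc s hmem.1 e he, hE.refl _⟩⟩
      intro es hes
      rw [KState.append_append]
      exact hcl ([e] ++ es) (by
        intro x hx
        rcases List.mem_append.mp hx with h | h
        · rcases List.mem_singleton.mp h with rfl; exact he
        · exact hes x h)
    · rintro ⟨C', t₀', ht₀', rfl⟩ ⟨t, ht, t', ht', e, he, rfl⟩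
      refine ⟨s.append [e], ⟨e, he, rfl⟩, ?_, ?_⟩
      · intro es hes
        rw [KState.append_append]
        exact hcl ([e] ++ es) (by
          intro x hx
          rcases List.mem_append.mp hx with h | h
          · rcases List.mem_singleton.mp h with rfl; exact he
          · exact hes x h)
      · have h1 : s.append [e] ∈ cls E S (t.append [e]) := hstep t₀ ht₀ s hmem t ht e he
        exact ⟨h1.1, hE.trans ht'.2 h1.2⟩
  intro s hs hcl φ
  exact bisim_satS hbisim2 φ s ⟨cls E S s, s, hs, rfl⟩ ⟨hcl, hs, hE.refl s⟩
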